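/- Let A ∈ ℝ^{p×p} and C ∈ ℝ^{q×q} be strictly upper triangular, t₁ ∈ ℝ^p and t₂ ∈ ℝ^q, m ∈ ℝ, s₂ = (I − C)^{−1} t₂, and suppose W₁₂, W'₁₂ ∈ ℝ^{p×q} both satisfy W₁₂ s₂ = m t₁ and W'₁₂ s₂ = m t₁. If W₁₂ ≠ W'₁₂ and s₂ has at least two nonzero entries, then q ≥ 2 and the two concrete models given by [[A, W₁₂],[0, C]] and [[A, W'₁₂],[0, C]] are distinct matrices sharing the same abstraction, i.e., both satisfy (I−W)^{−1}T = SG for the same T, S, G as in the Block Abstraction theorem. -/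

import Mathlib

/-!
Since `1 - [[A, W₁₂], [0, C]]` is block upper triangular with unipotent diagonal blocks, it is
invertible, and `(1 - W)⁻¹ T = S G` is equivalent to `T = (1 - W) S G`. Multiplying out blocks,
the diagonal blocks of this identity are the definitions of `s₁` and `s₂`, and the off-diagonal
block is exactly the constraint `W₁₂ s₂ = m t₁`. Hence every solution `W₁₂` of that linear
system yields a concrete model with the same abstraction, and distinct solutions yield distinct
models because `fromBlocks` is injective.
-/

open Matrix

theorem Matrix.det_one_sub_eq_one_of_strictlyUpper {R m : Type*} [CommRing R] [Fintype m]
    [DecidableEq m] [LinearOrder m] {M : Matrix m m R} (hM : ∀ i j, j ≤ i → M i j = 0) : (1 - M).det = 1 := by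
  have hupper : (1 - M).IsUpperTriangular := fun i j (hji : j < i) => by
    simp [hM i j hji.le, one_apply_ne hji.ne']
  rw [det_of_isUpperTriangular hupper]
  simp [hM]

namespace Matrix

variable {R l m k k' : Type*} [CommRing R] [DecidableEq l] [DecidableEq m]
  {A : Matrix l l R} {B : Matrix l m R} {C : Matrix m m R}

theorem one_sub_fromBlocks_zero₂₁ (A : Matrix l l R) (B : Matrix l m R) (C : Matrix m m R) :
    1 - fromBlocks A B 0 C = fromBlocks (1 - A) (-B) 0 (1 - C) := by
  rw [← fromBlocks_one, sub_eq_add_neg, fromBlocks_neg, fromBlocks_add]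
  simp [sub_eq_add_neg]

variable [Fintype l] [Fintype m] [Fintype k] [Fintype k'] [DecidableEq k] [DecidableEq k']

theorem isUnit_det_one_sub_fromBlocks_zero₂₁ (hA : IsUnit (1 - A).det)
    (hC : IsUnit (1 - C).det) : IsUnit (1 - fromBlocks A B 0 C).det := by
  rw [one_sub_fromBlocks_zero₂₁, det_fromBlocks_zero₂₁]
  exact hA.mul hC

theorem one_sub_fromBlocks_mul_fromBlocks_mul_fromBlocks {T₁ S₁ : Matrix l k R}
    {T₂ S₂ : Matrix m k' R} {G : Matrix k k' R} (hS₁ : (1 - A) * S₁ = T₁)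
    (hS₂ : (1 - C) * S₂ = T₂) (hB : B * S₂ = T₁ * G) :
    (1 - fromBlocks A B 0 C) * (fromBlocks S₁ 0 0 S₂ * fromBlocks 1 G 0 (1 : Matrix k' k' R)) =
      fromBlocks T₁ 0 0 T₂ := by
  rw [one_sub_fromBlocks_zero₂₁, fromBlocks_multiply, fromBlocks_multiply]
  simp only [Matrix.mul_zero, Matrix.zero_mul, Matrix.mul_one, add_zero,
    zero_add, ← Matrix.mul_assoc, hS₁, hS₂, Matrix.neg_mul, hB, add_neg_cancel]

theorem inv_one_sub_fromBlocks_mul_fromBlocks {T₁ S₁ : Matrix l k R} {T₂ S₂ : Matrix m k' R}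
    {G : Matrix k k' R} (hA : IsUnit (1 - A).det) (hC : IsUnit (1 - C).det)
    (hS₁ : S₁ = (1 - A)⁻¹ * T₁) (hS₂ : S₂ = (1 - C)⁻¹ * T₂) (hB : B * S₂ = T₁ * G) :
    (1 - fromBlocks A B 0 C)⁻¹ * fromBlocks T₁ 0 0 T₂ =
      fromBlocks S₁ 0 0 S₂ * fromBlocks 1 G 0 (1 : Matrix k' k' R) := by
  have hT₁ : (1 - A) * S₁ = T₁ := by rw [hS₁, mul_nonsing_inv_cancel_left _ _ hA]
  have hT₂ : (1 - C) * S₂ = T₂ := by rw [hS₂, mul_nonsing_inv_cancel_left _ _ hC]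
  rw [← one_sub_fromBlocks_mul_fromBlocks_mul_fromBlocks hT₁ hT₂ hB,
    nonsing_inv_mul_cancel_left _ _ (isUnit_det_one_sub_fromBlocks_zero₂₁ hA hC)]

theorem inv_one_sub_fromBlocks_mul_fromBlocks_replicateCol {t₁ s₁ : l → R} {t₂ s₂ : m → R}
    {c : R} (hA : IsUnit (1 - A).det) (hC : IsUnit (1 - C).det) (hs₁ : s₁ = (1 - A)⁻¹ *ᵥ t₁)
    (hs₂ : s₂ = (1 - C)⁻¹ *ᵥ t₂) (hB : B *ᵥ s₂ = c • t₁) :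
    (1 - fromBlocks A B 0 C)⁻¹ *
        fromBlocks (replicateCol (Fin 1) t₁) 0 0 (replicateCol (Fin 1) t₂) =
      fromBlocks (replicateCol (Fin 1) s₁) 0 0 (replicateCol (Fin 1) s₂) *
        fromBlocks 1 (of fun _ _ => c) 0 1 := by
  refine inv_one_sub_fromBlocks_mul_fromBlocks hA hC ?_ ?_ ?_
  · rw [hs₁, replicateCol_mulVec]
  · rw [hs₂, replicateCol_mulVec]
  · rw [← replicateCol_mulVec, hB]
    ext i j
    simp [mul_apply, mul_comm]

end Matrix

/-- Non-uniqueness of T-concretizations: two distinct inter-block weight matrices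
satisfying the block constraint give distinct concrete models with the same
abstraction. -/
theorem concretization_nonunique {p q : ℕ}
    (A : Matrix (Fin p) (Fin p) ℝ) (C : Matrix (Fin q) (Fin q) ℝ)
    (hA : ∀ i j : Fin p, j ≤ i → A i j = 0) (hC : ∀ i j : Fin q, j ≤ i → C i j = 0)
    (t₁ : Fin p → ℝ) (t₂ : Fin q → ℝ) (m : ℝ)
    (s₁ : Fin p → ℝ) (hs₁ : s₁ = (1 - A)⁻¹.mulVec t₁)
    (s₂ : Fin q → ℝ) (hs₂ : s₂ = (1 - C)⁻¹.mulVec t₂)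
    (W₁₂ W₁₂' : Matrix (Fin p) (Fin q) ℝ)
    (hW : W₁₂.mulVec s₂ = m • t₁) (hW' : W₁₂'.mulVec s₂ = m • t₁)
    (hne : W₁₂ ≠ W₁₂')
    (htwo : ∃ k l : Fin q, k ≠ l ∧ s₂ k ≠ 0 ∧ s₂ l ≠ 0) :
    2 ≤ q ∧
    Matrix.fromBlocks A W₁₂ 0 C ≠ Matrix.fromBlocks A W₁₂' 0 C ∧
    ((1 - Matrix.fromBlocks A W₁₂ 0 C)⁻¹ *
        Matrix.fromBlocks (Matrix.of fun i (_ : Fin 1) => t₁ i) 0 0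
          (Matrix.of fun i (_ : Fin 1) => t₂ i) =
      Matrix.fromBlocks (Matrix.of fun i (_ : Fin 1) => s₁ i) 0 0
          (Matrix.of fun i (_ : Fin 1) => s₂ i) *
        Matrix.fromBlocks 1 (Matrix.of fun (_ : Fin 1) (_ : Fin 1) => m) 0 1) ∧
    ((1 - Matrix.fromBlocks A W₁₂' 0 C)⁻¹ *
        Matrix.fromBlocks (Matrix.of fun i (_ : Fin 1) => t₁ i) 0 0
          (Matrix.of fun i (_ : Fin 1) => t₂ i) =
      Matrix.fromBlocks (Matrix.of fun i (_ : Fin 1) => s₁ i) 0 0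
          (Matrix.of fun i (_ : Fin 1) => s₂ i) *
        Matrix.fromBlocks 1 (Matrix.of fun (_ : Fin 1) (_ : Fin 1) => m) 0 1) := by
  have hdetA : IsUnit (1 - A).det := by simp [det_one_sub_eq_one_of_strictlyUpper hA]
  have hdetC : IsUnit (1 - C).det := by simp [det_one_sub_eq_one_of_strictlyUpper hC]
  obtain ⟨k, l, hkl, -, -⟩ := htwo
  refine ⟨?_, fun h => hne (fromBlocks_inj.mp h).2.1, ?_, ?_⟩
  · exact (by simpa using Fintype.one_lt_card_iff.mpr ⟨k, l, hkl⟩ : 1 < q)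
  · exact inv_one_sub_fromBlocks_mul_fromBlocks_replicateCol hdetA hdetC hs₁ hs₂ hW
  · exact inv_one_sub_fromBlocks_mul_fromBlocks_replicateCol hdetA hdetC hs₁ hs₂ hW'
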